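/- Let a : ℕ → ℕ (indexed from 1) satisfy: a(1) = 1, a(2) = 2, and for every n ≥ 2, a(n+1) is the smallest positive integer not among a(1), …, a(n) whose greatest common divisor with a(n) exceeds 1. If p is an odd prime and a(n) = p for some n, then n ≥ 2 and either a(n−1) = 2p or a(n+1) = 2p; that is, 2p is the term immediately before or immediately after p in the sequence. -/

import Mathlib

/-!
Before `p` appears, `2p` can only be chosen right after a term sharing a factor with it. That
term is not a multiple of `p`, or `p` itself would have been chosen, so it is even; then every
even number below `2p` is already used, so the term after `2p` is `p`. Hence if `2p` precedes `p`
it immediately precedes it, and otherwise `2p` is still available when `p` appears and, as every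
other unused multiple of `p` is larger, it is the next term.
-/

/-- The EKG sequence property: `a 1 = 1`, `a 2 = 2`, and for `n ≥ 2`,
`a (n+1)` is the smallest positive integer not among `a 1, …, a n`
whose gcd with `a n` exceeds 1. -/
def IsEKG (a : ℕ → ℕ) : Prop :=
  a 1 = 1 ∧ a 2 = 2 ∧
    ∀ n, 2 ≤ n →
      IsLeast {m : ℕ | 0 < m ∧ (∀ i, 1 ≤ i → i ≤ n → a i ≠ m) ∧
        1 < Nat.gcd m (a n)} (a (n + 1))

theorem Nat.Prime.dvd_of_one_lt_gcd {p m : ℕ} (hp : p.Prime) (h : 1 < Nat.gcd m p) : p ∣ m := by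
  by_contra hdvd
  have hcop : Nat.Coprime m p := Nat.coprime_comm.1 (hp.coprime_iff_not_dvd.2 hdvd)
  rw [hcop.gcd_eq_one] at h
  exact h.false

theorem Nat.Prime.dvd_or_dvd_of_one_lt_gcd_mul {p q m : ℕ} (hp : p.Prime) (hq : q.Prime)
    (h : 1 < Nat.gcd m (p * q)) : p ∣ m ∨ q ∣ m := by
  by_contra! hndvd
  have hcop : Nat.Coprime m (p * q) :=
    (Nat.coprime_comm.1 (hp.coprime_iff_not_dvd.2 hndvd.1)).mul_right
      (Nat.coprime_comm.1 (hq.coprime_iff_not_dvd.2 hndvd.2))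
  rw [hcop.gcd_eq_one] at h
  exact h.false

theorem Nat.two_mul_le_of_dvd_of_ne {p m : ℕ} (hm : 0 < m) (hpm : p ∣ m) (hne : m ≠ p) :
    2 * p ≤ m := by
  obtain ⟨c, rfl⟩ := hpm
  have hc : 2 ≤ c := by
    rcases c with _ | _ | c
    · simp at hm
    · simp at hne
    · omega
  nlinarith

def ekgCandidates (a : ℕ → ℕ) (n : ℕ) : Set ℕ :=
  {m | 0 < m ∧ (∀ i, 1 ≤ i → i ≤ n → a i ≠ m) ∧ 1 < Nat.gcd m (a n)}

namespace IsEKG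

variable {a : ℕ → ℕ}

theorem isLeast_succ (ha : IsEKG a) {n : ℕ} (hn : 2 ≤ n) :
    IsLeast (ekgCandidates a n) (a (n + 1)) :=
  ha.2.2 n hn

theorem injOn (ha : IsEKG a) : Set.InjOn a (Set.Ici 1) := by
  suffices h : ∀ i j, 1 ≤ i → i < j → a i ≠ a j by
    intro i hi j hj hij
    by_contra hne
    rcases Nat.lt_or_gt_of_ne hne with hlt | hlt
    · exact h i j hi hlt hij
    · exact h j i hj hlt hij.symm
  intro i j hi hij
  obtain ⟨k, rfl⟩ : ∃ k, j = k + 1 := ⟨j - 1, by omega⟩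
  rcases Nat.lt_or_ge k 2 with hk | hk
  · obtain rfl : i = 1 := by omega
    obtain rfl : k = 1 := by omega
    rw [ha.1, ha.2.1]
    decide
  · exact (ha.isLeast_succ hk).1.2.1 i hi (by omega)

theorem ne_of_lt (ha : IsEKG a) {i n : ℕ} (hi : 1 ≤ i) (hin : i < n) : a i ≠ a n :=
  fun h => hin.ne (ha.injOn hi (show 1 ≤ n by omega) h)

theorem two_le (ha : IsEKG a) {n : ℕ} (hn : 1 ≤ n) (h : 1 < a n) : 2 ≤ n := by
  by_contra! hlt
  obtain rfl : n = 1 := by omega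
  rw [ha.1] at h
  exact h.false

theorem three_le (ha : IsEKG a) {n : ℕ} (hn : 1 ≤ n) (h : 2 < a n) : 3 ≤ n := by
  by_contra! hlt
  interval_cases n
  · rw [ha.1] at h; omega
  · rw [ha.2.1] at h; omega

theorem exists_eq_of_lt_succ (ha : IsEKG a) {k m : ℕ} (hk : 2 ≤ k) (hm : 0 < m)
    (hg : 1 < Nat.gcd m (a k)) (hlt : m < a (k + 1)) : ∃ i, 1 ≤ i ∧ i ≤ k ∧ a i = m := by
  by_contra! h
  exact hlt.not_ge ((ha.isLeast_succ hk).2 ⟨hm, h, hg⟩)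

theorem succ_eq_two_mul (ha : IsEKG a) {n : ℕ} (hn : 2 ≤ n) (hp : (a n).Prime)
    (hfresh : ∀ i, 1 ≤ i → i ≤ n → a i ≠ 2 * a n) : a (n + 1) = 2 * a n := by
  refine (ha.isLeast_succ hn).unique ⟨⟨by linarith [hp.pos], hfresh, ?_⟩, ?_⟩
  · rw [Nat.gcd_eq_right (dvd_mul_left _ _)]
    exact hp.one_lt
  · rintro m ⟨hm, hmfresh, hmg⟩
    exact Nat.two_mul_le_of_dvd_of_ne hm (hp.dvd_of_one_lt_gcd hmg)
      (hmfresh n (by omega) le_rfl).symm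

theorem add_two_eq_of_even (ha : IsEKG a) {p j : ℕ} (hp : p.Prime) (hj : 2 ≤ j)
    (h2p : a (j + 1) = 2 * p) (h2 : 2 ∣ a j) (hfresh : ∀ i, 1 ≤ i → i ≤ j + 1 → a i ≠ p) :
    a (j + 2) = p := by
  refine (ha.isLeast_succ (by omega)).unique ⟨⟨hp.pos, hfresh, ?_⟩, ?_⟩
  · rw [h2p, Nat.gcd_eq_left (dvd_mul_left _ _)]
    exact hp.one_lt
  · rintro m ⟨hm, hmfresh, hmg⟩
    rw [h2p] at hmg
    rcases Nat.prime_two.dvd_or_dvd_of_one_lt_gcd_mul hp hmg with h2m | hpm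
    · by_contra! hmp
      have hg : 1 < Nat.gcd m (a j) :=
        lt_of_lt_of_le one_lt_two (Nat.le_of_dvd (Nat.gcd_pos_of_pos_left _ hm)
          (Nat.dvd_gcd h2m h2))
      obtain ⟨i, hi, hij, hai⟩ := ha.exists_eq_of_lt_succ hj hm hg (by omega)
      exact hmfresh i hi (by omega) hai
    · exact Nat.le_of_dvd hm hpm

theorem add_one_eq_of_eq_two_mul (ha : IsEKG a) {p j n : ℕ} (hp : p.Prime) (hn : 1 ≤ n)
    (hpn : a n = p) (hj : 1 ≤ j) (hjn : j ≤ n) (h2p : a j = 2 * p) : j + 1 = n := by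
  have hj3 : 3 ≤ j := ha.three_le hj (by linarith [hp.two_le])
  obtain ⟨k, rfl⟩ : ∃ k, j = k + 1 := ⟨j - 1, by omega⟩
  have hkn : k + 1 < n := by
    refine lt_of_le_of_ne hjn fun h => ?_
    rw [h, hpn] at h2p
    linarith [hp.pos]
  have hfresh : ∀ i, 1 ≤ i → i < n → a i ≠ p := fun i hi hin => hpn ▸ ha.ne_of_lt hi hin
  have hg : 1 < Nat.gcd (2 * p) (a k) := h2p ▸ (ha.isLeast_succ (by omega)).1.2.2
  rcases Nat.prime_two.dvd_or_dvd_of_one_lt_gcd_mul hp (Nat.gcd_comm (2 * p) (a k) ▸ hg)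
    with h2 | hpk
  · have hp' := ha.add_two_eq_of_even hp (by omega) h2p h2
      fun i hi hik => hfresh i hi (by omega)
    exact ha.injOn (show 1 ≤ k + 2 by omega) hn (hp'.trans hpn.symm)
  · have hle := (ha.isLeast_succ (show 2 ≤ k by omega)).2
      ⟨hp.pos, fun i hi hik => hfresh i hi (by omega), by
        rw [Nat.gcd_eq_left hpk]; exact hp.one_lt⟩
    rw [h2p] at hle
    linarith [hp.pos]

end IsEKG

theorem ekg_prime_neighbor_general (a : ℕ → ℕ) (ha : IsEKG a) (p : ℕ) (hp : p.Prime)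
    (n : ℕ) (hn1 : 1 ≤ n) (hn : a n = p) :
    2 ≤ n ∧ (a (n - 1) = 2 * p ∨ a (n + 1) = 2 * p) := by
  have hn2 : 2 ≤ n := ha.two_le hn1 (hn ▸ hp.one_lt)
  refine ⟨hn2, or_iff_not_imp_left.2 fun hpred => ?_⟩
  subst hn
  refine ha.succ_eq_two_mul hn2 hp fun i hi hin h2p => hpred ?_
  obtain rfl : i = n - 1 := by
    have := ha.add_one_eq_of_eq_two_mul hp hn1 rfl hi hin h2p
    omega
  exact h2p

theorem ekg_prime_neighbor (a : ℕ → ℕ) (ha : IsEKG a) (p : ℕ) (hp : p.Prime)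
    (hodd : Odd p) (n : ℕ) (hn1 : 1 ≤ n) (hn : a n = p) :
    2 ≤ n ∧ (a (n - 1) = 2 * p ∨ a (n + 1) = 2 * p) :=
  ekg_prime_neighbor_general a ha p hp n hn1 hn
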